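/- Let f : ℝ → ℝ be measurable and σ > 0, and let κ be the Markov kernel from ℝ to ℝ defined by κ(x) = N(f(x), σ²), the Gaussian measure with mean f(x) and variance σ². Let μ̃ and μ be probability measures on ℝ with everywhere strictly positive densities with respect to Lebesgue measure, with μ̃ ≠ μ and D_KL(μ̃ ‖ μ) < ∞. Then D_KL(μ̃.bind κ ‖ μ.bind κ) < D_KL(μ̃ ‖ μ). -/

import Mathlib

open MeasureTheory ProbabilityTheory
open scoped ENNReal NNReal Classical

/-- The Kullback–Leibler divergence between two measures. -/
noncomputable def klDiv {α : Type*} [MeasurableSpace α] (μ ν : Measure α) : ℝ≥0∞ :=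
  if μ ≪ ν ∧ Integrable (llr μ ν) μ then ENNReal.ofReal (∫ x, llr μ ν x ∂μ) else ⊤

/-!
Disintegrating the joint law `μ ⊗ₘ κ` along its output coordinate, data processing and the chain
rule give `KL(μ' ‖ μ) ≥ KL(κ ∘ₘ μ' ‖ κ ∘ₘ μ) + KL((κ ∘ₘ μ') ⊗ₘ κ†μ' ‖ (κ ∘ₘ μ') ⊗ₘ κ†μ)`.
If the posterior term vanished, the likelihood ratio `dμ'/dμ (x)` would equal
`d(κ ∘ₘ μ')/d(κ ∘ₘ μ) (y)` for almost every pair `(x, y)`. All the Gaussians `κ x` have the same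
null sets, so a function of `x` alone that agrees with a function of `y` alone must be constant,
and two probability measures with constant likelihood ratio coincide.
-/

lemma klDiv_eq_informationTheory_klDiv {α : Type*} [MeasurableSpace α] {μ ν : Measure α}
    (h : μ Set.univ = ν Set.univ) : klDiv μ ν = InformationTheory.klDiv μ ν := by
  rw [klDiv, InformationTheory.klDiv_def, measureReal_def, measureReal_def, h]
  simp

-- Inside this namespace `klDiv` is Mathlib's `InformationTheory.klDiv`.
namespace InformationTheory

variable {𝓧 𝓨 : Type*} {m𝓧 : MeasurableSpace 𝓧} {m𝓨 : MeasurableSpace 𝓨}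
  {μ' μ : Measure 𝓧} {κ : Kernel 𝓧 𝓨} [IsMarkovKernel κ]

lemma exists_ae_eq_const_of_ae_compProd_eq {β : Type*} [SFinite μ] [NeZero μ]
    (hκ : ∀ x x', κ x ≪ κ x') {u : 𝓧 → β} {w : 𝓨 → β}
    (h : ∀ᵐ p ∂(μ ⊗ₘ κ), u p.1 = w p.2) : ∃ c, u =ᵐ[μ] fun _ ↦ c := by
  have h' := Measure.ae_ae_of_ae_compProd h
  obtain ⟨x₀, hx₀⟩ := h'.exists
  refine ⟨u x₀, ?_⟩
  filter_upwards [h'] with x hx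
  obtain ⟨y, hxy, hx₀y⟩ := (hx.and ((hκ x x₀).ae_le hx₀)).exists
  exact hxy.trans hx₀y.symm

lemma eq_of_rnDeriv_ae_eq_const [IsProbabilityMeasure μ'] [IsProbabilityMeasure μ] (hac : μ' ≪ μ)
    {c : ℝ≥0∞} (hc : μ'.rnDeriv μ =ᵐ[μ] fun _ ↦ c) : μ' = μ := by
  have hμ' : μ' = c • μ := by
    rw [← Measure.withDensity_rnDeriv_eq μ' μ hac, withDensity_congr_ae hc, withDensity_const]
  have hc1 : 1 = c := by simpa using congrArg (· Set.univ) hμ'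
  rw [hμ', ← hc1, one_smul]

variable [StandardBorelSpace 𝓧] [Nonempty 𝓧]

section FiniteMeasure

variable [IsFiniteMeasure μ'] [IsFiniteMeasure μ]

lemma ae_rnDeriv_eq_of_posterior_eq (h : (κ ∘ₘ μ') ⊗ₘ κ†μ' = (κ ∘ₘ μ') ⊗ₘ κ†μ) :
    ∀ᵐ p ∂(μ ⊗ₘ κ), μ'.rnDeriv μ p.1 = (κ ∘ₘ μ').rnDeriv (κ ∘ₘ μ) p.2 := by
  have h_left := rnDeriv_measure_compProd_left μ' μ κ
  have h_right := rnDeriv_measure_compProd_left (κ ∘ₘ μ') (κ ∘ₘ μ) κ†μ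
  rw [← h, compProd_posterior_eq_map_swap, compProd_posterior_eq_map_swap] at h_right
  have h_swap := MeasurableEquiv.prodComm.measurableEmbedding.rnDeriv_map (μ' ⊗ₘ κ) (μ ⊗ₘ κ)
  filter_upwards [h_left, h_swap, ae_of_ae_map measurable_swap.aemeasurable h_right]
    with p hp_left hp_swap hp_right
  rw [← hp_left, ← hp_swap]
  exact hp_right

variable (μ' μ κ) in
lemma klDiv_comp_right_add_klDiv_posterior_le :
    klDiv (κ ∘ₘ μ') (κ ∘ₘ μ) + klDiv ((κ ∘ₘ μ') ⊗ₘ κ†μ') ((κ ∘ₘ μ') ⊗ₘ κ†μ) ≤ klDiv μ' μ := by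
  rw [← klDiv_compProd_eq_add, compProd_posterior_eq_map_swap, compProd_posterior_eq_map_swap,
    ← klDiv_compProd_left μ' μ κ]
  exact klDiv_map_le _ _ measurable_swap

end FiniteMeasure

theorem klDiv_comp_right_lt [IsProbabilityMeasure μ'] [IsProbabilityMeasure μ]
    (hκ : ∀ x x', κ x ≪ κ x') (hne : μ' ≠ μ) (hfin : klDiv μ' μ ≠ ∞) :
    klDiv (κ ∘ₘ μ') (κ ∘ₘ μ) < klDiv μ' μ := by
  have hac : μ' ≪ μ := (klDiv_ne_top_iff.mp hfin).1
  have h_posterior : klDiv ((κ ∘ₘ μ') ⊗ₘ κ†μ') ((κ ∘ₘ μ') ⊗ₘ κ†μ) ≠ 0 := by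
    rw [Ne, klDiv_eq_zero_iff]
    intro h
    obtain ⟨c, hc⟩ := exists_ae_eq_const_of_ae_compProd_eq hκ (ae_rnDeriv_eq_of_posterior_eq h)
    exact hne (eq_of_rnDeriv_ae_eq_const hac hc)
  have h_le := klDiv_comp_right_add_klDiv_posterior_le μ' μ κ
  have h_fin : klDiv (κ ∘ₘ μ') (κ ∘ₘ μ) ≠ ∞ :=
    ne_top_of_le_ne_top hfin (le_self_add.trans h_le)
  exact (ENNReal.lt_add_right h_fin h_posterior).trans_le h_le

end InformationTheory

lemma gaussianReal_absolutelyContinuous_gaussianReal (m m' : ℝ) {v v' : ℝ≥0} (hv : v ≠ 0)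
    (hv' : v' ≠ 0) : gaussianReal m v ≪ gaussianReal m' v' :=
  (gaussianReal_absolutelyContinuous m hv).trans (gaussianReal_absolutelyContinuous' m' hv')

theorem klDiv_bind_gaussian_lt_general
    (f : ℝ → ℝ) (σ : ℝ≥0) (hσ : 0 < σ)
    (κ : Kernel ℝ ℝ) [IsMarkovKernel κ]
    (hκ : ∀ x, κ x = gaussianReal (f x) (σ ^ 2))
    (μ' μ : Measure ℝ) [IsProbabilityMeasure μ'] [IsProbabilityMeasure μ]
    (hne : μ' ≠ μ) (hfin : klDiv μ' μ < ⊤) :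
    klDiv (μ'.bind κ) (μ.bind κ) < klDiv μ' μ := by
  have hv : σ ^ 2 ≠ 0 := pow_ne_zero 2 hσ.ne'
  have hκ_ac : ∀ x x', κ x ≪ κ x' := fun x x' ↦ by
    rw [hκ, hκ]
    exact gaussianReal_absolutelyContinuous_gaussianReal _ _ hv hv
  rw [klDiv_eq_informationTheory_klDiv (by simp)] at hfin
  rw [klDiv_eq_informationTheory_klDiv (by simp), klDiv_eq_informationTheory_klDiv (by simp)]
  exact InformationTheory.klDiv_comp_right_lt hκ_ac hne hfin.ne

/-- **Theorem 3 (Contraction of Cycle-SDEs) for the 1D DDPM step.** The Gaussian transition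
kernel `x ↦ N(f x, σ²)` strictly decreases the KL divergence between two distinct priors with
everywhere strictly positive Lebesgue densities. -/
theorem klDiv_bind_gaussian_lt
    (f : ℝ → ℝ) (hf_meas : Measurable f) (σ : ℝ≥0) (hσ : 0 < σ)
    (κ : Kernel ℝ ℝ) [IsMarkovKernel κ]
    (hκ : ∀ x, κ x = gaussianReal (f x) (σ ^ 2))
    (μ' μ : Measure ℝ) [IsProbabilityMeasure μ'] [IsProbabilityMeasure μ]
    (g' g : ℝ → ℝ) (hg'_meas : Measurable g') (hg_meas : Measurable g)
    (hg'_pos : ∀ x, 0 < g' x) (hg_pos : ∀ x, 0 < g x)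
    (hμ' : μ' = volume.withDensity (fun x => ENNReal.ofReal (g' x)))
    (hμ : μ = volume.withDensity (fun x => ENNReal.ofReal (g x)))
    (hne : μ' ≠ μ) (hfin : klDiv μ' μ < ⊤) :
    klDiv (μ'.bind κ) (μ.bind κ) < klDiv μ' μ :=
  klDiv_bind_gaussian_lt_general f σ hσ κ hκ μ' μ hne hfin
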